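/- For every k ≥ 1: 𝒟¹_k = 2 if and only if p_{k+1} = p_k + 2 and p_k + 1 is squarefree; and 𝒟¹_k = 4 if and only if p_{k+1} = p_k + 2 and ‖p_k + 1‖_∞ = 2. -/
import Mathlib


open scoped Classical
open Filter

/-- The largest exponent appearing in the prime factorization of `N`
(`0` for `N = 0, 1`). -/
noncomputable def normInf (N : ℕ) : ℕ :=
  N.factorization.support.sup fun p => N.factorization p

/-- `L_∞(N) = ∑_{M=2}^N max(‖M‖_∞, ‖M-1‖_∞)`, with `L_∞(1) = 0`. -/
noncomputable def Linf (N : ℕ) : ℕ :=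
  ∑ M ∈ Finset.Icc 2 N, max (normInf M) (normInf (M - 1))

/-- The `k`-th prime number, with `p_1 = 2`. -/
noncomputable def primeSeq (k : ℕ) : ℕ := Nat.nth Nat.Prime (k - 1)

/-- `𝒟¹_k = L_∞(p_{k+1}) - L_∞(p_k)`. -/
noncomputable def D1 (k : ℕ) : ℕ := Linf (primeSeq (k + 1)) - Linf (primeSeq k)

lemma factorization_le_normInf (N p : ℕ) : N.factorization p ≤ normInf N := by
  rcases eq_or_ne (N.factorization p) 0 with h | h
  · simp [h]
  · exact Finset.le_sup (f := fun p => N.factorization p) (Finsupp.mem_support_iff.2 h)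

lemma normInf_le_iff {N k : ℕ} : normInf N ≤ k ↔ ∀ p, N.factorization p ≤ k := by
  constructor
  · intro h p; exact le_trans (factorization_le_normInf N p) h
  · intro h; exact Finset.sup_le fun p _ => h p

lemma normInf_pow {p : ℕ} (hp : p.Prime) (n : ℕ) (hn : n ≠ 0) : normInf (p ^ n) = n := by
  unfold normInf
  rw [hp.factorization_pow, Finsupp.support_single_ne_zero _ hn]
  simp

lemma normInf_prime {p : ℕ} (hp : p.Prime) : normInf p = 1 := by
  simpa using normInf_pow hp 1 one_ne_zero

lemma one_le_normInf {N : ℕ} (h : 2 ≤ N) : 1 ≤ normInf N := by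
  obtain ⟨p, pp, pd⟩ := Nat.exists_prime_and_dvd (by omega : N ≠ 1)
  calc 1 ≤ N.factorization p := (pp.dvd_iff_one_le_factorization (by omega)).1 pd
    _ ≤ normInf N := factorization_le_normInf N p

lemma two_le_normInf {N : ℕ} (h : 4 ∣ N) (h0 : N ≠ 0) : 2 ≤ normInf N := by
  have : (2:ℕ) ≤ N.factorization 2 :=
    (Nat.Prime.pow_dvd_iff_le_factorization Nat.prime_two h0).1 (by simpa using h)
  exact le_trans this (factorization_le_normInf N 2)

lemma squarefree_iff_normInf {N : ℕ} (h0 : N ≠ 0) : Squarefree N ↔ normInf N ≤ 1 := by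
  rw [Nat.squarefree_iff_factorization_le_one h0, normInf_le_iff]

lemma Linf_diff {p q : ℕ} (h2 : 2 ≤ p) (hpq : p ≤ q) :
    Linf q - Linf p = ∑ M ∈ Finset.Ioc p q, max (normInf M) (normInf (M - 1)) := by
  have : Linf q = Linf p + ∑ M ∈ Finset.Ioc p q, max (normInf M) (normInf (M - 1)) := by
    unfold Linf
    rw [show (2:ℕ) = 1 + 1 from rfl, Finset.Icc_add_one_left_eq_Ioc, Finset.Icc_add_one_left_eq_Ioc]
    exact (Finset.sum_Ioc_consecutive _ (by omega) hpq).symm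
  omega

lemma term_ge_one {M : ℕ} (h : 2 ≤ M) : 1 ≤ max (normInf M) (normInf (M - 1)) :=
  le_max_of_le_left (one_le_normInf h)

theorem stmt_18 (k : ℕ) (hk : 1 ≤ k) :
    (D1 k = 2 ↔ primeSeq (k + 1) = primeSeq k + 2 ∧ Squarefree (primeSeq k + 1)) ∧
    (D1 k = 4 ↔ primeSeq (k + 1) = primeSeq k + 2 ∧ normInf (primeSeq k + 1) = 2) := by
  set f : ℕ → ℕ := fun M => max (normInf M) (normInf (M - 1)) with hf
  set p := primeSeq k with hp
  set q := primeSeq (k + 1) with hq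
  have hpp : p.Prime := Nat.prime_nth_prime _
  have hqp : q.Prime := Nat.prime_nth_prime _
  have hlt : p < q := by
    rw [hp, hq]
    unfold primeSeq
    exact (Nat.nth_lt_nth Nat.infinite_setOf_prime).2 (by omega)
  have h2p : 2 ≤ p := hpp.two_le
  have hD : D1 k = ∑ M ∈ Finset.Ioc p q, f M := by
    rw [show D1 k = Linf q - Linf p from rfl]
    exact Linf_diff h2p hlt.le
  set g := q - p with hg
  have hqeq : q = p + g := by omega
  have hg1 : 1 ≤ g := by omega
  -- expansion helpers
  have expand2 : ∀ a : ℕ, ∑ M ∈ Finset.Ioc a (a + 2), f M = f (a + 1) + f (a + 2) := by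
    intro a
    rw [show a + 2 = (a + 1) + 1 from rfl, Finset.sum_Ioc_succ_top (by omega),
      Finset.sum_Ioc_succ_top (by omega), Finset.Ioc_self, Finset.sum_empty]
    omega
  have expand3 : ∀ a : ℕ, ∑ M ∈ Finset.Ioc a (a + 3), f M = f (a + 1) + f (a + 2) + f (a + 3) := by
    intro a
    rw [show a + 3 = (a + 2) + 1 from rfl, Finset.sum_Ioc_succ_top (by omega), expand2]
  have expand4 : ∀ a : ℕ,
      ∑ M ∈ Finset.Ioc a (a + 4), f M = f (a + 1) + f (a + 2) + f (a + 3) + f (a + 4) := by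
    intro a
    rw [show a + 4 = (a + 3) + 1 from rfl, Finset.sum_Ioc_succ_top (by omega), expand3]
  rcases Nat.lt_or_ge g 5 with hg5 | hg5
  · interval_cases g
    · -- g = 1 : D1 = 1
      have hq1 : q = p + 1 := hqeq
      have hD1 : D1 k = 1 := by
        rw [hD, hq1, Nat.Ioc_succ_singleton, Finset.sum_singleton]
        have : f (p + 1) = max (normInf (p + 1)) (normInf p) := by simp [hf]
        rw [this, normInf_prime hpp, ← hq1, normInf_prime hqp]
        decide
      refine ⟨⟨fun h => by omega, fun h => by omega⟩, ⟨fun h => by omega, fun h => by omega⟩⟩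
    · -- g = 2 : D1 = 2 * normInf (p+1)
      have hq2 : q = p + 2 := hqeq
      have hn1 : 1 ≤ normInf (p + 1) := one_le_normInf (by omega)
      have hfp1 : f (p + 1) = normInf (p + 1) := by
        simp only [hf, Nat.add_sub_cancel, normInf_prime hpp]
        omega
      have hfp2 : f (p + 2) = normInf (p + 1) := by
        have h1 : normInf (p + 2) = 1 := normInf_prime (hq2 ▸ hqp)
        simp only [hf, show p + 2 - 1 = p + 1 from rfl, h1]
        omega
      have hD2 : D1 k = normInf (p + 1) + normInf (p + 1) := by
        rw [hD, hqeq, expand2, hfp1, hfp2]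
      have hsq : Squarefree (p + 1) ↔ normInf (p + 1) = 1 := by
        rw [squarefree_iff_normInf (by omega)]; omega
      refine ⟨?_, ?_⟩
      · rw [hsq]; omega
      · exact ⟨fun h => ⟨hq2, by omega⟩, fun ⟨_, h⟩ => by omega⟩
    · -- g = 3 : then p = 2, q = 5, D1 = 5
      have hp2 : p = 2 := by
        rcases hpp.eq_two_or_odd' with h2 | hodd
        · exact h2
        · exfalso
          have h2q : 2 ∣ q := by obtain ⟨m, hm⟩ := hodd; omega
          have := hqp.eq_one_or_self_of_dvd 2 h2q
          omega
      have hD5 : D1 k = 5 := by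
        rw [hD, hqeq, hp2, expand3]
        have f3 : f (2 + 1) = 1 := by
          simp only [hf]
          rw [show (2:ℕ) + 1 - 1 = 2 from rfl, normInf_prime Nat.prime_two,
            normInf_prime Nat.prime_three]
          decide
        have f4 : f (2 + 2) = 2 := by
          simp only [hf]
          rw [show (2:ℕ) + 2 - 1 = 3 from rfl, normInf_prime Nat.prime_three,
            show (2:ℕ) + 2 = 2 ^ 2 from rfl, normInf_pow Nat.prime_two 2 (by omega)]
          decide
        have f5 : f (2 + 3) = 2 := by
          simp only [hf]
          rw [show (2:ℕ) + 3 - 1 = 2 ^ 2 from rfl, normInf_pow Nat.prime_two 2 (by omega),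
            show (2:ℕ) + 3 = 5 from rfl, normInf_prime (by norm_num)]
          decide
        rw [f3, f4, f5]
      refine ⟨⟨fun h => by omega, fun ⟨h, _⟩ => by omega⟩,
        ⟨fun h => by omega, fun ⟨h, _⟩ => by omega⟩⟩
    · -- g = 4 : D1 ≥ 5
      have hpodd : p % 2 = 1 := by
        rcases hpp.eq_two_or_odd' with h2 | hodd
        · exfalso
          have : q = 6 := by omega
          rw [this] at hqp
          norm_num at hqp
        · exact Nat.odd_iff.1 hodd
      have hdvd : 4 ∣ p + 1 ∨ 4 ∣ p + 3 := by
        have h4 : p % 4 = 1 ∨ p % 4 = 3 := by omega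
        rcases h4 with h | h
        · right; omega
        · left; omega
      have hb1 : normInf (p + 1) ≤ f (p + 1) := le_max_left _ _
      have hb3 : normInf (p + 3) ≤ f (p + 3) := by
        have : f (p + 3) = max (normInf (p + 3)) (normInf (p + 2)) := by simp [hf]
        rw [this]; exact le_max_left _ _
      have hb2 : 1 ≤ f (p + 2) := term_ge_one (by omega)
      have hb4 : 1 ≤ f (p + 4) := term_ge_one (by omega)
      have hn1 : 1 ≤ normInf (p + 1) := one_le_normInf (by omega)
      have hn3 : 1 ≤ normInf (p + 3) := one_le_normInf (by omega)
      have hbig : 3 ≤ normInf (p + 1) + normInf (p + 3) := by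
        rcases hdvd with h | h
        · have := two_le_normInf h (by omega); omega
        · have := two_le_normInf h (by omega); omega
      have hD5 : 5 ≤ D1 k := by
        rw [hD, hqeq, expand4]
        omega
      refine ⟨⟨fun h => by omega, fun ⟨h, _⟩ => by omega⟩,
        ⟨fun h => by omega, fun ⟨h, _⟩ => by omega⟩⟩
  · -- g ≥ 5 : D1 ≥ g ≥ 5
    have hD5 : 5 ≤ D1 k := by
      rw [hD]
      calc (5:ℕ) ≤ (Finset.Ioc p q).card • 1 := by
            rw [Nat.card_Ioc, smul_eq_mul, mul_one]; omega
        _ ≤ ∑ M ∈ Finset.Ioc p q, f M := by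
            apply Finset.card_nsmul_le_sum
            intro x hx
            exact term_ge_one (by have := (Finset.mem_Ioc.1 hx).1; omega)
    refine ⟨⟨fun h => by omega, fun ⟨h, _⟩ => by omega⟩,
      ⟨fun h => by omega, fun ⟨h, _⟩ => by omega⟩⟩
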